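/- Assume there exists a [δ]^{<θ}-normal ideal on P_κ(λ). Then for every A ∈ (NS^{[δ]^{<θ}}_{κ,λ})⁺, cof(NS^{[δ]^{<θ}}_{κ,λ} | A) = 𝔡^{|P_θ̄(δ)|}_{κ,λ}. -/

import Mathlib

open Cardinal Set

namespace PklNormal

/-- `P_κ(l)`: the collection of subsets of (the set of ordinals below) `l`
of cardinality `< κ`. -/
def PSet (κ : Cardinal.{0}) (l : Ordinal.{0}) : Set (Set Ordinal.{0}) :=
  {a | a ⊆ Set.Iio l ∧ #↥a < Cardinal.lift.{1} κ}

/-- `e ∈ P_{|a ∩ σ|}(a ∩ γ)`. -/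
def inP (σ : Cardinal.{0}) (γ : Ordinal.{0}) (a e : Set Ordinal.{0}) : Prop :=
  e ⊆ a ∩ Set.Iio γ ∧ #↥e < #↥(a ∩ Set.Iio σ.ord)

/-- The collection `I_{κ,l}` of non-cofinal subsets of `P_κ(l)`. -/
def Ikl (κ : Cardinal.{0}) (l : Ordinal.{0}) : Set (Set (Set Ordinal.{0})) :=
  {B | B ⊆ PSet κ l ∧ ∃ a ∈ PSet κ l, ∀ b ∈ B, ¬ a ⊆ b}

/-- An ideal on `P_κ(l)`. -/
structure IsIdeal (κ : Cardinal.{0}) (l : Ordinal.{0})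
    (K : Set (Set (Set Ordinal.{0}))) : Prop where
  mem_subset : ∀ B ∈ K, B ⊆ PSet κ l
  subset_mem : ∀ B ∈ K, ∀ C ⊆ B, C ∈ K
  sUnion_mem : ∀ Y ⊆ K, Y.Nonempty → #↥Y < Cardinal.lift.{1} κ → ⋃₀ Y ∈ K
  nonCofinal_subset : Ikl κ l ⊆ K
  univ_not_mem : PSet κ l ∉ K

/-- `K⁺`: the subsets of `P_κ(l)` not in `K`. -/
def plus (κ : Cardinal.{0}) (l : Ordinal.{0}) (K : Set (Set (Set Ordinal.{0}))) :
    Set (Set (Set Ordinal.{0})) :=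
  {B | B ⊆ PSet κ l ∧ B ∉ K}

/-- `K*`: the subsets of `P_κ(l)` whose complement is in `K`. -/
def star (κ : Cardinal.{0}) (l : Ordinal.{0}) (K : Set (Set (Set Ordinal.{0}))) :
    Set (Set (Set Ordinal.{0})) :=
  {B | B ⊆ PSet κ l ∧ PSet κ l \ B ∈ K}

/-- `K|A`. -/
def restrict (κ : Cardinal.{0}) (l : Ordinal.{0}) (K : Set (Set (Set Ordinal.{0})))
    (A : Set (Set Ordinal.{0})) : Set (Set (Set Ordinal.{0})) :=
  {B | B ⊆ PSet κ l ∧ B ∩ A ∈ K}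

/-- `∇^{[γ]^{<σ}} J`. -/
def nabla (κ : Cardinal.{0}) (l : Ordinal.{0}) (σ : Cardinal.{0}) (γ : Ordinal.{0})
    (J : Set (Set (Set Ordinal.{0}))) : Set (Set (Set Ordinal.{0})) :=
  {B | ∃ F : Set Ordinal.{0} → Set (Set Ordinal.{0}),
    (∀ e ∈ PSet σ γ, F e ∈ J) ∧
    B ⊆ {a | a ∈ PSet κ l ∧ a ∩ Set.Iio σ.ord = ∅} ∪
      ⋃ e ∈ PSet σ γ, {a | a ∈ F e ∧ inP σ γ a e}}

/-- `J` is `[γ]^{<σ}`-normal. -/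
def IsNormal (κ : Cardinal.{0}) (l : Ordinal.{0}) (σ : Cardinal.{0}) (γ : Ordinal.{0})
    (J : Set (Set (Set Ordinal.{0}))) : Prop :=
  J = nabla κ l σ γ J

def IsNormalIdeal (κ : Cardinal.{0}) (l : Ordinal.{0}) (σ : Cardinal.{0}) (γ : Ordinal.{0})
    (J : Set (Set (Set Ordinal.{0}))) : Prop :=
  IsIdeal κ l J ∧ IsNormal κ l σ γ J

/-- `N` is the smallest `[γ]^{<σ}`-normal ideal on `P_κ(l)`. -/
def IsLeastNormalIdeal (κ : Cardinal.{0}) (l : Ordinal.{0}) (σ : Cardinal.{0}) (γ : Ordinal.{0})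
    (N : Set (Set (Set Ordinal.{0}))) : Prop :=
  IsNormalIdeal κ l σ γ N ∧ ∀ J, IsNormalIdeal κ l σ γ J → N ⊆ J

/-- `∇^δ K`, the ordinal-indexed diagonal union. -/
def nablaOrd (κ : Cardinal.{0}) (l : Ordinal.{0}) (δ : Ordinal.{0})
    (K : Set (Set (Set Ordinal.{0}))) : Set (Set (Set Ordinal.{0})) :=
  {B | ∃ F : Ordinal.{0} → Set (Set Ordinal.{0}),
    (∀ α < δ, F α ∈ K) ∧
    B ⊆ {a | a ∈ PSet κ l ∧ (0 : Ordinal) ∉ a} ∪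
      ⋃ α ∈ Set.Iio δ, {a | a ∈ F α ∧ α ∈ a}}

/-- `J` is `δ`-normal. -/
def IsOrdNormal (κ : Cardinal.{0}) (l : Ordinal.{0}) (δ : Ordinal.{0})
    (J : Set (Set (Set Ordinal.{0}))) : Prop :=
  J = nablaOrd κ l δ J

/-- `θ̄`: equals `θ` if `θ < κ`, or if `θ = κ` and `κ` is a limit cardinal;
equals `ν` if `θ = κ = ν⁺`. -/
noncomputable def thetaBar (κ θ : Cardinal.{0}) : Cardinal.{0} :=
  haveI := Classical.propDecidable (θ < κ ∨ Order.IsSuccLimit κ)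
  if θ < κ ∨ Order.IsSuccLimit κ then θ else sSup {ν | Order.succ ν = κ}

/-- `cof(K)`: the least number of generators of `K`. -/
noncomputable def cofIdeal (K : Set (Set (Set Ordinal.{0}))) : Cardinal.{1} :=
  sInf {c | ∃ S ⊆ K, #↥S = c ∧ ∀ B ∈ K, ∃ C ∈ S, B ⊆ C}

/-- The dominating number `𝔡^μ_{κ,l}`. -/
noncomputable def dNum (κ : Cardinal.{0}) (l : Ordinal.{0}) (μ : Cardinal.{1}) : Cardinal.{1} :=
  sInf {c | ∃ F : Set (μ.ord.ToType → Set Ordinal.{0}),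
    #↥F = c ∧ (∀ f ∈ F, ∀ i, f i ∈ PSet κ l) ∧
    ∀ g : μ.ord.ToType → Set Ordinal.{0}, (∀ i, g i ∈ PSet κ l) →
      ∃ f ∈ F, ∀ i, g i ⊆ f i}

/-- `u(ρ,μ)`: the least cardinality of a cofinal subset of `(P_ρ(μ), ⊆)`. -/
noncomputable def uNum (ρ μ : Cardinal.{0}) : Cardinal.{1} :=
  sInf {c | ∃ X ⊆ PSet ρ μ.ord, #↥X = c ∧ ∀ e ∈ PSet ρ μ.ord, ∃ x ∈ X, e ⊆ x}

/-- `cov(lam, ν, ν, 2)`: the least cardinality of an `X ⊆ P_ν(lam)` such that every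
member of `P_ν(lam)` is contained in a member of `X`. -/
noncomputable def covNum (lam ν : Cardinal.{0}) : Cardinal.{1} :=
  sInf {c | ∃ X ⊆ PSet ν lam.ord, #↥X = c ∧ ∀ e ∈ PSet ν lam.ord, ∃ x ∈ X, e ⊆ x}

/-- `C` is closed unbounded in `l`. -/
def IsClubIn (C : Set Ordinal.{0}) (l : Ordinal.{0}) : Prop :=
  C ⊆ Set.Iio l ∧ (∀ p < l, ∃ q ∈ C, p < q) ∧
    (∀ o < l, Order.IsSuccLimit o → (∀ p < o, ∃ q ∈ C, p < q ∧ q < o) → o ∈ C)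

/-- `κ` is a Mahlo cardinal: the set of regular cardinals below `κ` is stationary in `κ`. -/
def IsMahlo (κ : Cardinal.{0}) : Prop :=
  ∀ C : Set Ordinal.{0}, IsClubIn C κ.ord →
    ∃ o ∈ C, ∃ ρ : Cardinal.{0}, ρ.IsRegular ∧ ρ.ord = o

/-!
`≥`: if `S` generates `N|A`, then for each `C ∈ S` the set `A \ C` is `N`-positive, hence
cofinal in `P_κ(λ)`; so for every `e ∈ P_θ̄(δ)` there is `a ∈ A \ C` so large that
`e ∈ P_{|a ∩ θ|}(a ∩ δ)`. By normality, the `a` that fail `g(e) ⊆ a` for such an `e` form a set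
in `N`, so these choices, one function per `C`, dominate every `g`.

`≤`: call `a` closed under `h` if `h(s) ⊆ a` for every finite descending sequence `s` of sets `e`
with `e ∈ P_{|a ∩ θ|}(a ∩ δ)`. The sets `{a : a ∩ θ = ∅} ∪ (P_κ(λ) \ {a : a closed under h})`
generate a `[δ]^{<θ}`-normal ideal: diagonal unions are absorbed by merging the functions `h_e`,
and it is proper because well-founded induction on the first term of a sequence puts the sets of
non-closed `a` into every normal ideal. So it contains `NS`, and `h` only matters on sequences
from `P_θ̄(δ)`, of which there are at most `|P_θ̄(δ)|` (or finitely many).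
-/

section PSet

variable {κ σ : Cardinal.{0}} {l γ : Ordinal.{0}}

theorem empty_mem_PSet (h : σ ≠ 0) : (∅ : Set Ordinal.{0}) ∈ PSet σ γ :=
  ⟨empty_subset _, by simpa [pos_iff_ne_zero] using h⟩

theorem iUnion_mem_PSet (hκ : κ.IsRegular) {ι : Type 1} (hι : #ι < lift.{1} κ)
    {f : ι → Set Ordinal.{0}} (hf : ∀ i, f i ∈ PSet κ l) : ⋃ i, f i ∈ PSet κ l :=
  ⟨iUnion_subset fun i => (hf i).1,
    (card_iUnion_lt_iff_forall_of_isRegular hκ.lift hι).2 fun i => (hf i).2⟩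

theorem iUnion_mem_PSet_of_finite (hκ : κ.IsRegular) {ι : Type 1} [Finite ι]
    {f : ι → Set Ordinal.{0}} (hf : ∀ i, f i ∈ PSet κ l) : ⋃ i, f i ∈ PSet κ l :=
  iUnion_mem_PSet hκ ((lt_aleph0_of_finite ι).trans_le (aleph0_le_lift.2 hκ.aleph0_le)) hf

theorem extend_mem_PSet (hκ : κ ≠ 0) {α β : Type*} {f : α → β} {g : α → Set Ordinal.{0}}
    (hg : ∀ i, g i ∈ PSet κ l) (j : β) : Function.extend f g (fun _ => ∅) j ∈ PSet κ l := by
  classical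
  rw [Function.extend_def]
  split
  exacts [hg _, empty_mem_PSet hκ]

theorem mk_Iio_ord (c : Cardinal.{0}) : #(Iio c.ord) = lift.{1} c := by
  rw [Cardinal.mk_Iio_ordinal, card_ord]

end PSet

theorem lt_thetaBar_iff {κ θ c : Cardinal.{0}} (hθκ : θ ≤ κ) :
    c < thetaBar κ θ ↔ Order.succ c ≤ θ ∧ Order.succ c < κ := by
  unfold thetaBar
  split_ifs with h
  · rw [Order.succ_le_iff]
    refine ⟨fun hc => ⟨hc, ?_⟩, And.left⟩
    rcases h with hθ | hlim
    · exact (Order.succ_le_of_lt hc).trans_lt hθ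
    · exact hlim.succ_lt (hc.trans_le hθκ)
  · obtain ⟨hκθ, hnlim⟩ := not_or.1 h
    replace hκθ := not_lt.1 hκθ
    rcases eq_or_ne κ 0 with rfl | hκ
    · simp
    obtain ⟨ν, -, rfl⟩ := Order.not_isSuccPrelimit_iff_succ_eq.1
      fun hpre => hnlim ⟨fun hmin => hκ (hmin.eq_bot), hpre⟩
    have hν : {ν' | Order.succ ν' = Order.succ ν} = {ν} :=
      Set.ext fun _ => Order.succ_injective.eq_iff
    rw [hν, csSup_singleton, ← Order.succ_lt_succ_iff]
    exact ⟨fun hc => ⟨hc.le.trans hκθ, hc⟩, And.right⟩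

theorem thetaBar_ne_zero {κ θ : Cardinal.{0}} (hκ : ℵ₀ ≤ κ) (hθ : θ ≠ 0) (hθκ : θ ≤ κ) :
    thetaBar κ θ ≠ 0 := by
  rw [← pos_iff_ne_zero, lt_thetaBar_iff hθκ, Cardinal.succ_zero]
  exact ⟨Cardinal.one_le_iff_ne_zero.2 hθ, one_lt_aleph0.trans_le hκ⟩

section InP

variable {κ θ : Cardinal.{0}} {l δ : Ordinal.{0}} {a e : Set Ordinal.{0}}

theorem inP.mem_PSet (h : inP θ δ a e) : e ∈ PSet θ δ :=
  ⟨h.1.trans inter_subset_right,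
    h.2.trans_le ((mk_le_mk_of_subset inter_subset_right).trans (mk_Iio_ord θ).le)⟩

theorem inP.mem_PSet_thetaBar (hθκ : θ ≤ κ) (ha : a ∈ PSet κ l) (h : inP θ δ a e) :
    e ∈ PSet (thetaBar κ θ) δ := by
  refine ⟨h.1.trans inter_subset_right, ?_⟩
  obtain ⟨d, hdκ, hd⟩ := lt_lift_iff.1 ((mk_le_mk_of_subset inter_subset_left).trans_lt ha.2)
  have hdθ : d ≤ θ := by
    rw [← lift_le.{1}, hd, ← mk_Iio_ord]
    exact mk_le_mk_of_subset inter_subset_right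
  obtain ⟨c, hcd, hce⟩ := lt_lift_iff.1 (hd ▸ h.2)
  rw [← hce, lift_lt, lt_thetaBar_iff hθκ]
  have := Order.succ_le_of_lt hcd
  exact ⟨this.trans hdθ, this.trans_lt hdκ⟩

/-- The witness is `e ∪ |e|⁺`, which lies in `P_κ(l)` because `|e|⁺ < κ` by the choice
of `θ̄`. -/
theorem exists_forall_superset_inP (hκ : ℵ₀ ≤ κ) (hθκ : θ ≤ κ) (hθl : θ.ord ≤ l) (hδl : δ ≤ l)
    (he : e ∈ PSet (thetaBar κ θ) δ) :
    ∃ b ∈ PSet κ l, ∀ a, b ⊆ a → inP θ δ a e := by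
  obtain ⟨c, hc, hce⟩ := lt_lift_iff.1 he.2
  obtain ⟨hcθ, hcκ⟩ := (lt_thetaBar_iff hθκ).1 hc
  have hwθ : Iio (Order.succ c).ord ⊆ Iio θ.ord := Iio_subset_Iio (ord_le_ord.2 hcθ)
  refine ⟨e ∪ Iio (Order.succ c).ord, ⟨?_, ?_⟩, fun a hba => ⟨?_, ?_⟩⟩
  · exact union_subset (he.1.trans (Iio_subset_Iio hδl)) (hwθ.trans (Iio_subset_Iio hθl))
  · calc #↥(e ∪ Iio (Order.succ c).ord) ≤ #e + #(Iio (Order.succ c).ord) := mk_union_le _ _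
      _ = lift.{1} (c + Order.succ c) := by rw [lift_add, hce, mk_Iio_ord]
      _ < lift.{1} κ := lift_lt.2 (add_lt_of_lt hκ ((Order.le_succ c).trans_lt hcκ) hcκ)
  · exact subset_inter (subset_union_left.trans hba) he.1
  · calc #e = lift.{1} c := hce.symm
      _ < lift.{1} (Order.succ c) := lift_lt.2 (Order.lt_succ c)
      _ = #(Iio (Order.succ c).ord) := (mk_Iio_ord _).symm
      _ ≤ #↥(a ∩ Iio θ.ord) := mk_le_mk_of_subset (subset_inter (subset_union_right.trans hba) hwθ)

end InP

namespace IsIdeal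

variable {κ : Cardinal.{0}} {l : Ordinal.{0}} {N : Set (Set (Set Ordinal.{0}))}

theorem empty_mem (hI : IsIdeal κ l N) (hκ : κ ≠ 0) : (∅ : Set (Set Ordinal.{0})) ∈ N :=
  hI.nonCofinal_subset ⟨empty_subset _, ∅, empty_mem_PSet hκ, fun _ h => h.elim⟩

theorem union_mem (hI : IsIdeal κ l N) (hκ : ℵ₀ ≤ κ) {B₁ B₂ : Set (Set Ordinal.{0})}
    (h₁ : B₁ ∈ N) (h₂ : B₂ ∈ N) : B₁ ∪ B₂ ∈ N := by
  rw [← sUnion_pair]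
  refine hI.sUnion_mem _ (pair_subset h₁ h₂) (insert_nonempty _ _) ?_
  exact (lt_aleph0_iff_set_finite.2 (toFinite _)).trans_le (aleph0_le_lift.2 hκ)

theorem mem_of_subset_union (hI : IsIdeal κ l N) (hκ : ℵ₀ ≤ κ) {B₁ B₂ C : Set (Set Ordinal.{0})}
    (h₁ : B₁ ∈ N) (h₂ : B₂ ∈ N) (hC : C ⊆ B₁ ∪ B₂) : C ∈ N :=
  hI.subset_mem _ (hI.union_mem hκ h₁ h₂) _ hC

theorem not_superset_mem (hI : IsIdeal κ l N) {b : Set Ordinal.{0}} (hb : b ∈ PSet κ l) :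
    {a | a ∈ PSet κ l ∧ ¬ b ⊆ a} ∈ N :=
  hI.nonCofinal_subset ⟨fun _ ha => ha.1, b, hb, fun _ ha => ha.2⟩

theorem exists_superset_of_notMem (hI : IsIdeal κ l N) {B : Set (Set Ordinal.{0})}
    (hBP : B ⊆ PSet κ l) (hBN : B ∉ N) {b : Set Ordinal.{0}} (hb : b ∈ PSet κ l) :
    ∃ a ∈ B, b ⊆ a := by
  by_contra! hB
  exact hBN (hI.subset_mem _ (hI.not_superset_mem hb) _ fun a ha => ⟨hBP ha, hB a ha⟩)

end IsIdeal

def thinSet (κ : Cardinal.{0}) (l : Ordinal.{0}) (σ : Cardinal.{0}) : Set (Set Ordinal.{0}) :=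
  {a | a ∈ PSet κ l ∧ a ∩ Iio σ.ord = ∅}

section Normal

variable {κ θ : Cardinal.{0}} {l δ : Ordinal.{0}} {J N : Set (Set (Set Ordinal.{0}))}

theorem subset_nabla (hθ : θ ≠ 0) (hJ : ∀ B ∈ J, B ⊆ PSet κ l) : J ⊆ nabla κ l θ δ J := by
  refine fun B hB => ⟨fun _ => B, fun _ _ => hB, fun a ha => ?_⟩
  by_cases hthin : a ∩ Iio θ.ord = ∅
  · exact Or.inl ⟨hJ B hB ha, hthin⟩
  · refine Or.inr (mem_biUnion (empty_mem_PSet hθ) ⟨ha, empty_subset _, ?_⟩)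
    have := nonempty_iff_ne_empty.2 hthin |>.to_subtype
    simpa using (mk_ne_zero (↥(a ∩ Iio θ.ord))).bot_lt

theorem IsNormal.mem (hN : IsNormal κ l θ δ N) {B : Set (Set Ordinal.{0})}
    (F : Set Ordinal.{0} → Set (Set Ordinal.{0})) (hF : ∀ e ∈ PSet θ δ, F e ∈ N)
    (hB : B ⊆ thinSet κ l θ ∪ ⋃ e ∈ PSet θ δ, {a | a ∈ F e ∧ inP θ δ a e}) : B ∈ N :=
  hN ▸ ⟨F, hF, hB⟩

theorem IsNormal.thinSet_mem (hN : IsNormal κ l θ δ N) (hI : IsIdeal κ l N) (hκ : κ ≠ 0) :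
    thinSet κ l θ ∈ N :=
  hN.mem (fun _ => ∅) (fun _ _ => hI.empty_mem hκ) subset_union_left

theorem IsNormal.exists_inP_not_subset_mem (hN : IsNormal κ l θ δ N) (hI : IsIdeal κ l N)
    (hκ : κ ≠ 0) {S : Set (Set Ordinal.{0})} {g : S → Set Ordinal.{0}}
    (hg : ∀ e, g e ∈ PSet κ l) :
    {a | a ∈ PSet κ l ∧ ∃ e : S, inP θ δ a e ∧ ¬ g e ⊆ a} ∈ N := by
  refine hN.mem (fun e => {a | a ∈ PSet κ l ∧ ∃ he : e ∈ S, ¬ g ⟨e, he⟩ ⊆ a})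
    (fun e _ => ?_) ?_
  · by_cases he : e ∈ S
    · exact hI.subset_mem _ (hI.not_superset_mem (hg ⟨e, he⟩)) _
        fun a ⟨haP, _, ha⟩ => ⟨haP, ha⟩
    · exact hI.subset_mem _ (hI.empty_mem hκ) _ fun a ⟨_, he', _⟩ => he he'
  · rintro a ⟨haP, ⟨e, he⟩, hae, hga⟩
    exact Or.inr (mem_biUnion hae.mem_PSet ⟨⟨haP, he, hga⟩, hae⟩)

end Normal

/-- Finite sets of terms are coded as lists strictly decreasing for a fixed well-order, so that
sets of sequences can be handled by well-founded induction on their first term. -/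
def Descending (s : List (Set Ordinal.{0})) : Prop :=
  s.Pairwise fun x y => WellOrderingRel y x

theorem Descending.exists_insert (x : Set Ordinal.{0}) :
    ∀ {s : List (Set Ordinal.{0})}, Descending s →
      ∃ t, Descending t ∧ s.Sublist t ∧ x ∈ t ∧ t ⊆ x :: s
  | [], _ => ⟨[x], List.pairwise_singleton _ _, List.nil_sublist _, List.mem_singleton_self x,
      List.Subset.refl _⟩
  | y :: s, hs => by
    have hys := List.pairwise_cons.1 hs
    rcases trichotomous_of WellOrderingRel x y with hxy | rfl | hyx
    · obtain ⟨t, ht, hst, hxt, hts⟩ := Descending.exists_insert x hys.2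
      refine ⟨y :: t, List.pairwise_cons.2 ⟨fun z hz => ?_, ht⟩, hst.cons_cons y,
        List.mem_cons_of_mem y hxt, List.cons_subset.2 ⟨by simp, List.Subset.trans hts ?_⟩⟩
      · rcases List.mem_cons.1 (hts hz) with rfl | hzs
        exacts [hxy, hys.1 z hzs]
      · exact List.cons_subset_cons x (List.subset_cons_self y s)
    · exact ⟨x :: s, hs, List.Sublist.refl _, List.mem_cons_self, List.subset_cons_self x _⟩
    · refine ⟨x :: y :: s, List.pairwise_cons.2 ⟨fun z hz => ?_, hs⟩,
        List.sublist_cons_self x _, List.mem_cons_self, List.Subset.refl _⟩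
      rcases List.mem_cons.1 hz with rfl | hzs
      exacts [hyx, _root_.trans (hys.1 z hzs) hyx]

def Guards (θ : Cardinal.{0}) (δ : Ordinal.{0}) (a : Set Ordinal.{0})
    (s : List (Set Ordinal.{0})) : Prop :=
  ∀ e ∈ s, inP θ δ a e

def closedUnder (κ : Cardinal.{0}) (l : Ordinal.{0}) (θ : Cardinal.{0}) (δ : Ordinal.{0})
    (h : List (Set Ordinal.{0}) → Set Ordinal.{0}) : Set (Set Ordinal.{0}) :=
  {a | a ∈ PSet κ l ∧ ∀ s, Descending s → Guards θ δ a s → h s ⊆ a}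

def escapeSet (κ : Cardinal.{0}) (l : Ordinal.{0}) (θ : Cardinal.{0}) (δ : Ordinal.{0})
    (h : List (Set Ordinal.{0}) → Set Ordinal.{0}) (T : Set (Set Ordinal.{0})) :
    Set (Set Ordinal.{0}) :=
  {a | a ∈ PSet κ l ∧ ∃ s, Descending s ∧ (∀ e ∈ s, e ∈ T) ∧ Guards θ δ a s ∧ ¬ h s ⊆ a}

section Escape

variable {κ θ : Cardinal.{0}} {l δ : Ordinal.{0}} {N : Set (Set (Set Ordinal.{0}))}

/-- Peeling off the largest term `e` of a sequence: what escapes `h` from `a` along `e :: s`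
escapes `h (e :: ·)` along `s`, whose terms all lie below `e`. -/
theorem escapeSet_mem_of_forall (hI : IsIdeal κ l N) (hN : IsNormal κ l θ δ N) (hκ : ℵ₀ ≤ κ)
    {h : List (Set Ordinal.{0}) → Set Ordinal.{0}} (hh : ∀ s, h s ∈ PSet κ l)
    {T : Set (Set Ordinal.{0})}
    (IH : ∀ e ∈ T, ∀ h' : List (Set Ordinal.{0}) → Set Ordinal.{0}, (∀ s, h' s ∈ PSet κ l) →
      escapeSet κ l θ δ h' {x | WellOrderingRel x e} ∈ N) :
    escapeSet κ l θ δ h T ∈ N := by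
  have hF : ∀ e ∈ PSet θ δ,
      {a | e ∈ T ∧ a ∈ escapeSet κ l θ δ (fun s => h (e :: s)) {x | WellOrderingRel x e}} ∈ N := by
    intro e _
    by_cases heT : e ∈ T
    · exact hI.subset_mem _ (IH e heT _ fun s => hh (e :: s)) _ fun a ha => ha.2
    · exact hI.subset_mem _ (hI.empty_mem (aleph0_pos.trans_le hκ).ne') _
        fun a ha => (heT ha.1).elim
  refine hI.mem_of_subset_union hκ (hI.not_superset_mem (hh [])) (hN.mem _ hF subset_union_right) ?_
  rintro a ⟨haP, _ | ⟨e, s⟩, hs, hsT, hsa, hha⟩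
  · exact Or.inl ⟨haP, hha⟩
  · have hes := List.pairwise_cons.1 hs
    have hae : inP θ δ a e := hsa e List.mem_cons_self
    refine Or.inr (mem_biUnion hae.mem_PSet ⟨⟨hsT e List.mem_cons_self, haP, s, hes.2,
      hes.1, fun x hx => hsa x (List.mem_cons_of_mem e hx), hha⟩, hae⟩)

theorem escapeSet_mem (hI : IsIdeal κ l N) (hN : IsNormal κ l θ δ N) (hκ : ℵ₀ ≤ κ)
    {h : List (Set Ordinal.{0}) → Set Ordinal.{0}} (hh : ∀ s, h s ∈ PSet κ l)
    (T : Set (Set Ordinal.{0})) : escapeSet κ l θ δ h T ∈ N := by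
  have hbelow : ∀ x, ∀ h' : List (Set Ordinal.{0}) → Set Ordinal.{0}, (∀ s, h' s ∈ PSet κ l) →
      escapeSet κ l θ δ h' {y | WellOrderingRel y x} ∈ N := by
    intro x
    induction x using WellOrderingRel.isWellOrder.wf.induction with
    | _ x IH => exact fun h' hh' => escapeSet_mem_of_forall hI hN hκ hh' fun e he => IH e he
  exact escapeSet_mem_of_forall hI hN hκ hh fun e _ => hbelow e

theorem compl_closedUnder_mem (hI : IsIdeal κ l N) (hN : IsNormal κ l θ δ N) (hκ : ℵ₀ ≤ κ)
    {h : List (Set Ordinal.{0}) → Set Ordinal.{0}} (hh : ∀ s, h s ∈ PSet κ l) :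
    PSet κ l \ closedUnder κ l θ δ h ∈ N := by
  refine hI.subset_mem _ (escapeSet_mem hI hN hκ hh univ) _ fun a ⟨haP, ha⟩ => ⟨haP, ?_⟩
  simp only [closedUnder, mem_ofPred_eq, not_and, not_forall] at ha
  obtain ⟨s, hs, hsa, hha⟩ := ha haP
  exact ⟨s, hs, fun _ _ => mem_univ _, hsa, hha⟩

end Escape

def closureIdeal (κ : Cardinal.{0}) (l : Ordinal.{0}) (θ : Cardinal.{0}) (δ : Ordinal.{0}) :
    Set (Set (Set Ordinal.{0})) :=
  {B | B ⊆ PSet κ l ∧ ∃ h : List (Set Ordinal.{0}) → Set Ordinal.{0},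
    (∀ s, h s ∈ PSet κ l) ∧ B ⊆ thinSet κ l θ ∪ (PSet κ l \ closedUnder κ l θ δ h)}

def diagJoin (H : Set Ordinal.{0} → List (Set Ordinal.{0}) → Set Ordinal.{0})
    (s : List (Set Ordinal.{0})) : Set Ordinal.{0} :=
  ⋃ p : {e // e ∈ s} × {t // t ∈ s.sublists}, H p.1 p.2

section ClosureIdeal

variable {κ θ : Cardinal.{0}} {l δ : Ordinal.{0}} {N : Set (Set (Set Ordinal.{0}))}

theorem mem_closedUnder_of_diagJoin {H : Set Ordinal.{0} → List (Set Ordinal.{0}) → Set Ordinal.{0}}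
    {a e : Set Ordinal.{0}} (ha : a ∈ closedUnder κ l θ δ (diagJoin H)) (hae : inP θ δ a e) :
    a ∈ closedUnder κ l θ δ (H e) := by
  refine ⟨ha.1, fun s hs hsa => ?_⟩
  obtain ⟨t, ht, hst, het, hts⟩ := hs.exists_insert e
  have hta : Guards θ δ a t := fun x hx => (List.mem_cons.1 (hts hx)).elim (· ▸ hae) (hsa x)
  exact (subset_iUnion (fun p : {e // e ∈ t} × {u // u ∈ t.sublists} => H p.1 p.2)
    (⟨e, het⟩, ⟨s, List.mem_sublists.2 hst⟩)).trans (ha.2 t ht hta)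

theorem closureIdeal_isIdeal (hκ : κ.IsRegular) (hI : IsIdeal κ l N) (hN : IsNormal κ l θ δ N) :
    IsIdeal κ l (closureIdeal κ l θ δ) where
  mem_subset _ hB := hB.1
  subset_mem := fun _ ⟨hBP, h, hh, hB⟩ _ hCB => ⟨hCB.trans hBP, h, hh, hCB.trans hB⟩
  sUnion_mem Y hY _ hYκ := by
    choose h hh hBh using fun B : Y => (hY B.2).2
    refine ⟨sUnion_subset fun B hB => (hY hB).1, fun s => ⋃ B : Y, h B s,
      fun s => iUnion_mem_PSet hκ hYκ fun B => hh B s, ?_⟩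
    rintro a ⟨B, hB, haB⟩
    refine (hBh ⟨B, hB⟩ haB).imp_right fun ⟨haP, ha⟩ => ⟨haP, fun hcl => ha ?_⟩
    exact ⟨hcl.1, fun s hs hsa =>
      (subset_iUnion (fun B : Y => h B s) ⟨B, hB⟩).trans (hcl.2 s hs hsa)⟩
  nonCofinal_subset := fun B ⟨hBP, b, hb, hB⟩ =>
    ⟨hBP, fun _ => b, fun _ => hb, fun a ha =>
      Or.inr ⟨hBP ha, fun hcl =>
        hB a ha (hcl.2 [] List.Pairwise.nil fun _ h => (List.not_mem_nil h).elim)⟩⟩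
  univ_not_mem := fun ⟨_, h, hh, hP⟩ => hI.univ_not_mem
    (hI.mem_of_subset_union hκ.aleph0_le (hN.thinSet_mem hI hκ.ne_zero)
      (compl_closedUnder_mem hI hN hκ.aleph0_le hh) hP)

/-- The witnesses `H e` of the pieces of a diagonal union are merged by `diagJoin`. -/
theorem nabla_closureIdeal_subset (hκ : κ.IsRegular) :
    nabla κ l θ δ (closureIdeal κ l θ δ) ⊆ closureIdeal κ l θ δ := by
  rintro B ⟨F, hF, hB⟩
  have hH : ∀ e, ∃ h : List (Set Ordinal.{0}) → Set Ordinal.{0}, (∀ s, h s ∈ PSet κ l) ∧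
      (e ∈ PSet θ δ → F e ⊆ thinSet κ l θ ∪ (PSet κ l \ closedUnder κ l θ δ h)) := by
    intro e
    by_cases he : e ∈ PSet θ δ
    · obtain ⟨-, h, hh, hFe⟩ := hF e he
      exact ⟨h, hh, fun _ => hFe⟩
    · exact ⟨fun _ => ∅, fun _ => empty_mem_PSet hκ.ne_zero, fun h => (he h).elim⟩
  choose H hHP hFH using hH
  have hBP : B ⊆ PSet κ l := fun a ha => (hB ha).elim (·.1) fun ha' => by
    obtain ⟨e, he, haF, -⟩ := mem_iUnion₂.1 ha'
    exact (hF e he).1 haF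
  refine ⟨hBP, diagJoin H, fun s => iUnion_mem_PSet_of_finite hκ fun p => hHP _ _, ?_⟩
  intro a haB
  rcases hB haB with hthin | ha
  · exact Or.inl hthin
  obtain ⟨e, he, haF, hae⟩ := mem_iUnion₂.1 ha
  exact (hFH e he haF).imp_right fun ⟨haP, hna⟩ =>
    ⟨haP, fun hcl => hna (mem_closedUnder_of_diagJoin hcl hae)⟩

theorem closureIdeal_isNormalIdeal (hκ : κ.IsRegular) (hθ : θ ≠ 0)
    (hN : IsNormalIdeal κ l θ δ N) : IsNormalIdeal κ l θ δ (closureIdeal κ l θ δ) :=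
  ⟨closureIdeal_isIdeal hκ hN.1 hN.2,
    (subset_nabla hθ fun _ hB => hB.1).antisymm (nabla_closureIdeal_subset hκ)⟩

end ClosureIdeal

def IsDominating (κ : Cardinal.{0}) (l : Ordinal.{0}) {T : Type 1}
    (F : Set (T → Set Ordinal.{0})) : Prop :=
  (∀ f ∈ F, ∀ i, f i ∈ PSet κ l) ∧
    ∀ g : T → Set Ordinal.{0}, (∀ i, g i ∈ PSet κ l) → ∃ f ∈ F, ∀ i, g i ⊆ f i

/-- `𝔡` with an arbitrary index type in place of the ordinal `μ`. -/
noncomputable def domNum (κ : Cardinal.{0}) (l : Ordinal.{0}) (T : Type 1) : Cardinal.{1} :=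
  sInf {c | ∃ F : Set (T → Set Ordinal.{0}), #F = c ∧ IsDominating κ l F}

section DomNum

variable {κ : Cardinal.{0}} {l : Ordinal.{0}} {T T' : Type 1}

theorem domNum_le {F : Set (T → Set Ordinal.{0})} (hF : IsDominating κ l F) :
    domNum κ l T ≤ #F :=
  csInf_le' ⟨F, rfl, hF⟩

theorem exists_isDominating_mk_eq (κ : Cardinal.{0}) (l : Ordinal.{0}) (T : Type 1) :
    ∃ F : Set (T → Set Ordinal.{0}), IsDominating κ l F ∧ #F = domNum κ l T := by
  obtain ⟨F, hF, hFd⟩ := csInf_mem (s := {c | ∃ F : Set (T → Set Ordinal.{0}),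
    #F = c ∧ IsDominating κ l F})
    ⟨_, {f | ∀ i, f i ∈ PSet κ l}, rfl, fun _ hf => hf, fun g hg => ⟨g, hg, fun _ => subset_rfl⟩⟩
  exact ⟨F, hFd, hF⟩

theorem domNum_le_of_embedding (hκ : κ ≠ 0) (j : T ↪ T') : domNum κ l T ≤ domNum κ l T' := by
  obtain ⟨F, ⟨hFP, hFdom⟩, hF⟩ := exists_isDominating_mk_eq κ l T'
  refine (domNum_le (F := (· ∘ j) '' F) ⟨?_, fun g hg => ?_⟩).trans (mk_image_le.trans hF.le)
  · rintro _ ⟨f, hf, rfl⟩ i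
    exact hFP f hf (j i)
  · obtain ⟨f, hf, hgf⟩ := hFdom _ (extend_mem_PSet (f := j) hκ hg)
    refine ⟨f ∘ j, mem_image_of_mem _ hf, fun i => ?_⟩
    simpa only [Function.comp_apply, j.injective.extend_apply] using hgf (j i)

theorem domNum_le_of_finite (hκ : κ.IsRegular) [Finite T] [Nonempty T'] :
    domNum κ l T ≤ domNum κ l T' := by
  obtain ⟨F, ⟨hFP, hFdom⟩, hF⟩ := exists_isDominating_mk_eq κ l T'
  obtain ⟨i₀⟩ := ‹Nonempty T'›
  refine (domNum_le (F := (fun f _ => f i₀) '' F) ⟨?_, fun g hg => ?_⟩).trans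
    (mk_image_le.trans hF.le)
  · rintro _ ⟨f, hf, rfl⟩ _
    exact hFP f hf i₀
  · obtain ⟨f, hf, hgf⟩ := hFdom (fun _ => ⋃ i, g i) fun _ => iUnion_mem_PSet_of_finite hκ hg
    exact ⟨_, mem_image_of_mem _ hf, fun i => (subset_iUnion g i).trans (hgf i₀)⟩

theorem dNum_mk (hκ : κ ≠ 0) (T : Type 1) : dNum κ l #T = domNum κ l T := by
  obtain ⟨e⟩ := Cardinal.eq.1 (by rw [mk_toType, card_ord] : #(#T).ord.ToType = #T)
  exact (domNum_le_of_embedding hκ e.toEmbedding).antisymm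
    (domNum_le_of_embedding hκ e.symm.toEmbedding)

end DomNum

def descendingIn (S : Set (Set Ordinal.{0})) : Set (List (Set Ordinal.{0})) :=
  {s | Descending s ∧ ∀ e ∈ s, e ∈ S}

theorem descendingIn.injective_attachWith (S : Set (Set Ordinal.{0})) :
    Function.Injective fun s : descendingIn S =>
      (⟨s.1.attachWith (· ∈ S) s.2.2,
        List.Nodup.of_map Subtype.val (by simpa using s.2.1.nodup)⟩ : {t : List S // t.Nodup}) :=
  fun s t hst => Subtype.ext (by simpa using congrArg (List.unattach ∘ Subtype.val) hst)

theorem domNum_descendingIn_le {κ : Cardinal.{0}} {l : Ordinal.{0}} (hκ : κ.IsRegular)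
    {S : Set (Set Ordinal.{0})} (hS : S.Nonempty) :
    domNum κ l (descendingIn S) ≤ domNum κ l S := by
  rcases S.finite_or_infinite with hfin | hinf
  · have := hfin.fintype
    have := Finite.of_injective _ (descendingIn.injective_attachWith S)
    have := hS.to_subtype
    exact domNum_le_of_finite hκ
  · have := hinf.to_subtype
    obtain ⟨j⟩ := Cardinal.le_def _ _ |>.1 <| calc
      #(descendingIn S) ≤ #{t : List S // t.Nodup} :=
        mk_le_of_injective (descendingIn.injective_attachWith S)
      _ ≤ #(List S) := mk_subtype_le _
      _ = #S := mk_list_eq_mk _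
    exact domNum_le_of_embedding hκ.ne_zero j

theorem cofIdeal_le {K S : Set (Set (Set Ordinal.{0}))} (hSK : S ⊆ K)
    (hS : ∀ B ∈ K, ∃ C ∈ S, B ⊆ C) : cofIdeal K ≤ #S :=
  csInf_le' ⟨S, hSK, rfl, hS⟩

section Cofinality

variable {κ θ : Cardinal.{0}} {l δ : Ordinal.{0}} {N : Set (Set (Set Ordinal.{0}))}
  {A : Set (Set Ordinal.{0})}

theorem exists_mem_diff_superset (hκ : ℵ₀ ≤ κ) (hI : IsIdeal κ l N) (hA : A ∈ plus κ l N)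
    {C : Set (Set Ordinal.{0})} (hC : C ∈ restrict κ l N A) {b : Set Ordinal.{0}}
    (hb : b ∈ PSet κ l) : ∃ a ∈ A \ C, b ⊆ a := by
  refine hI.exists_superset_of_notMem (sdiff_subset.trans hA.1) (fun hAC => hA.2 ?_) hb
  exact hI.mem_of_subset_union hκ hC.2 hAC fun a ha => (em (a ∈ C)).imp (⟨·, ha⟩) (⟨ha, ·⟩)

/-- Each generator `C` of `N|A` yields the function choosing, for every `e ∈ P_θ̄(δ)`, an
`a ∈ A \ C` that forces `e ∈ P_{|a ∩ θ|}(a ∩ δ)`; by normality these functions dominate. -/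
theorem domNum_le_cofIdeal_restrict (hκ : ℵ₀ ≤ κ) (hθκ : θ ≤ κ) (hθl : θ.ord ≤ l)
    (hδl : δ ≤ l) (hI : IsIdeal κ l N) (hN : IsNormal κ l θ δ N) (hA : A ∈ plus κ l N) :
    domNum κ l (PSet (thetaBar κ θ) δ) ≤ cofIdeal (restrict κ l N A) := by
  refine le_csInf ⟨_, _, subset_rfl, rfl, fun B hB => ⟨B, hB, subset_rfl⟩⟩ ?_
  rintro _ ⟨S, hSN, rfl, hS⟩
  choose b hbP hb using fun e : PSet (thetaBar κ θ) δ =>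
    exists_forall_superset_inP hκ hθκ hθl hδl e.2
  choose P hPAC hPb using fun (C : S) e =>
    exists_mem_diff_superset hκ hI hA (hSN C.2) (hbP e)
  refine (domNum_le (F := range P) ⟨?_, fun g hg => ?_⟩).trans mk_range_le
  · rintro _ ⟨C, rfl⟩ e
    exact hA.1 (hPAC C e).1
  have hD := hN.exists_inP_not_subset_mem hI (aleph0_pos.trans_le hκ).ne' hg
  obtain ⟨C, hCS, hDC⟩ := hS _ ⟨fun a ha => ha.1, hI.subset_mem _ hD _ inter_subset_left⟩
  refine ⟨P ⟨C, hCS⟩, mem_range_self _, fun e => ?_⟩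
  by_contra hge
  exact (hPAC ⟨C, hCS⟩ e).2 (hDC ⟨hA.1 (hPAC ⟨C, hCS⟩ e).1, e, hb e _ (hPb _ e), hge⟩)

theorem union_compl_closedUnder_mem_restrict (hκ : κ.IsRegular) (hI : IsIdeal κ l N)
    (hN : IsNormal κ l θ δ N)
    {h : List (Set Ordinal.{0}) → Set Ordinal.{0}} (hh : ∀ s, h s ∈ PSet κ l)
    (A : Set (Set Ordinal.{0})) :
    (PSet κ l \ A) ∪ (thinSet κ l θ ∪ (PSet κ l \ closedUnder κ l θ δ h)) ∈ restrict κ l N A := by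
  refine ⟨union_subset sdiff_subset (union_subset (fun a ha => ha.1) sdiff_subset),
    hI.mem_of_subset_union hκ.aleph0_le (hN.thinSet_mem hI hκ.ne_zero)
      (compl_closedUnder_mem hI hN hκ.aleph0_le hh) ?_⟩
  rintro a ⟨ha | ha, haA⟩
  exacts [(ha.2 haA).elim, ha]

theorem closedUnder_extend_subset (hθκ : θ ≤ κ) {h : List (Set Ordinal.{0}) → Set Ordinal.{0}}
    {h' : descendingIn (PSet (thetaBar κ θ) δ) → Set Ordinal.{0}} (hhh' : ∀ s, h s.1 ⊆ h' s) :
    closedUnder κ l θ δ (Function.extend Subtype.val h' fun _ => ∅) ⊆ closedUnder κ l θ δ h := by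
  refine fun a ⟨haP, ha⟩ => ⟨haP, fun s hs hsa => ?_⟩
  have hsθ : s ∈ descendingIn (PSet (thetaBar κ θ) δ) :=
    ⟨hs, fun e he => (hsa e he).mem_PSet_thetaBar hθκ haP⟩
  have := ha s hs hsa
  rw [show s = (⟨s, hsθ⟩ : descendingIn _).1 from rfl, Subtype.val_injective.extend_apply] at this
  exact (hhh' ⟨s, hsθ⟩).trans this

/-- `N` lies in `closureIdeal`, so `N|A` is generated by the sets
`(P_κ(l) \ A) ∪ thinSet ∪ (P_κ(l) \ closedUnder h)`, and only the values of `h` on descending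
sequences from `P_θ̄(δ)` matter. -/
theorem cofIdeal_restrict_le_domNum (hκ : κ.IsRegular) (hθ : θ ≠ 0) (hθκ : θ ≤ κ)
    (hN : IsLeastNormalIdeal κ l θ δ N) (A : Set (Set Ordinal.{0})) :
    cofIdeal (restrict κ l N A) ≤ domNum κ l (descendingIn (PSet (thetaBar κ θ) δ)) := by
  obtain ⟨⟨hI, hnor⟩, hleast⟩ := hN
  obtain ⟨H, ⟨hHP, hHdom⟩, hH⟩ :=
    exists_isDominating_mk_eq κ l (descendingIn (PSet (thetaBar κ θ) δ))
  let G (h : descendingIn (PSet (thetaBar κ θ) δ) → Set Ordinal.{0}) : Set (Set Ordinal.{0}) :=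
    (PSet κ l \ A) ∪ (thinSet κ l θ ∪
      (PSet κ l \ closedUnder κ l θ δ (Function.extend Subtype.val h fun _ => ∅)))
  refine (cofIdeal_le (S := G '' H) ?_ fun B hB => ?_).trans (mk_image_le.trans hH.le)
  · rintro _ ⟨h, hh, rfl⟩
    exact union_compl_closedUnder_mem_restrict hκ hI hnor
      (extend_mem_PSet hκ.ne_zero (hHP h hh)) A
  obtain ⟨-, h, hh, hBA⟩ := hleast _ (closureIdeal_isNormalIdeal hκ hθ ⟨hI, hnor⟩) hB.2
  obtain ⟨h', hh'H, hhh'⟩ := hHdom (fun s => h s.1) fun s => hh s.1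
  refine ⟨G h', mem_image_of_mem _ hh'H, fun a haB => ?_⟩
  by_cases haA : a ∈ A
  · exact Or.inr ((hBA ⟨haB, haA⟩).imp_right fun ⟨haP, hna⟩ =>
      ⟨haP, fun hcl => hna (closedUnder_extend_subset hθκ hhh' hcl)⟩)
  · exact Or.inl ⟨hB.1 haB, haA⟩

end Cofinality

theorem stmt0_general (κ lam θ : Cardinal.{0}) (δ : Ordinal.{0})
    (hκ : κ.IsRegular) (hkl : κ ≤ lam) (hθ2 : 2 ≤ θ) (hθκ : θ ≤ κ)
    (hdl : δ ≤ lam.ord) :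
    ∀ N, IsLeastNormalIdeal κ lam.ord θ δ N →
      ∀ A ∈ plus κ lam.ord N,
        cofIdeal (restrict κ lam.ord N A) = dNum κ lam.ord (#↥(PSet (thetaBar κ θ) δ)) := by
  intro N hN A hA
  have hθ : θ ≠ 0 := (two_pos.trans_le hθ2).ne'
  have hP : (PSet (thetaBar κ θ) δ).Nonempty :=
    ⟨∅, empty_mem_PSet (thetaBar_ne_zero hκ.aleph0_le hθ hθκ)⟩
  rw [dNum_mk hκ.ne_zero]
  exact le_antisymm
    ((cofIdeal_restrict_le_domNum hκ hθ hθκ hN A).trans (domNum_descendingIn_le hκ hP))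
    (domNum_le_cofIdeal_restrict hκ.aleph0_le hθκ (ord_le_ord.2 (hθκ.trans hkl)) hdl
      hN.1.1 hN.1.2 hA)

/-- Assume there exists a `[δ]^{<θ}`-normal ideal on `P_κ(λ)`. Then for every
`A ∈ (NS^{[δ]^{<θ}}_{κ,λ})⁺`, `cof(NS^{[δ]^{<θ}}_{κ,λ} | A) = 𝔡^{|P_θ̄(δ)|}_{κ,λ}`. -/
theorem stmt0 (κ lam θ : Cardinal.{0}) (δ : Ordinal.{0})
    (hκ : κ.IsRegular) (hkl : κ ≤ lam) (hθ2 : 2 ≤ θ) (hθκ : θ ≤ κ)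
    (hδ1 : 1 ≤ δ) (hdl : δ ≤ lam.ord)
    (hex : ∃ J, IsNormalIdeal κ lam.ord θ δ J) :
    ∀ N, IsLeastNormalIdeal κ lam.ord θ δ N →
      ∀ A ∈ plus κ lam.ord N,
        cofIdeal (restrict κ lam.ord N A) = dNum κ lam.ord (#↥(PSet (thetaBar κ θ) δ)) :=
  stmt0_general κ lam θ δ hκ hkl hθ2 hθκ hdl

end PklNormal
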